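/- For every real u > 0 and every real ε ≥ 0, one has 0 ≤ Ψ(u) − exp(uε + ε²/2)·Ψ(u + ε) ≤ (ε/u)·Ψ(u). -/

import Mathlib

/-!
Completing the square, `e^{uε+ε²/2} Ψ(u+ε) = ∫_u^∞ e^{-(t-u)ε} φ(t) dt`, so the difference is
`∫_u^∞ (1 - e^{-(t-u)ε}) φ(t) dt`. Since `0 ≤ 1 - e^{-x} ≤ x` for `x ≥ 0`, it lies between `0` and
`ε ∫_u^∞ (t-u) φ(t) dt = ε (φ(u) - uΨ(u))`, and the Mills-ratio bound `uφ(u) ≤ (1+u²)Ψ(u)` turns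
the latter into `(ε/u) Ψ(u)`.
-/

open MeasureTheory

/-- The standard normal density `φ(z) = (2π)^{-1/2} exp(−z²/2)`. -/
noncomputable def phi (x : ℝ) : ℝ := (Real.sqrt (2 * Real.pi))⁻¹ * Real.exp (-x ^ 2 / 2)

/-- The standard Gaussian survival function `Ψ(x) = ∫_x^∞ φ(z) dz`. -/
noncomputable def Psi (x : ℝ) : ℝ := ∫ z in Set.Ioi x, phi z

open Set Filter Topology Real

lemma phi_eq_mul_exp : phi = fun x => (√(2 * π))⁻¹ * exp (-(1 / 2) * x ^ 2) := by
  ext x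
  rw [phi]
  ring_nf

lemma phi_pos (x : ℝ) : 0 < phi x := by
  rw [phi]
  positivity

lemma continuous_phi : Continuous phi := by
  rw [phi_eq_mul_exp]
  fun_prop

lemma hasDerivAt_phi (x : ℝ) : HasDerivAt phi (-x * phi x) x := by
  have h : HasDerivAt (fun y : ℝ => -y ^ 2 / 2) (-x) x :=
    (((hasDerivAt_pow 2 x).neg).div_const 2).congr_deriv (by push_cast; ring)
  exact (h.exp.const_mul _).congr_deriv (by rw [phi]; ring)

lemma integrable_pow_mul_phi (n : ℕ) : Integrable fun x => x ^ n * phi x := by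
  have h := (integrable_rpow_mul_exp_neg_mul_sq (b := 1 / 2) (by norm_num)
    (s := n) (by linarith [n.cast_nonneg (α := ℝ)])).const_mul (√(2 * π))⁻¹
  simp only [rpow_natCast] at h
  convert h using 2 with x
  rw [phi_eq_mul_exp]
  ring

lemma integrable_phi : Integrable phi := by
  simpa using integrable_pow_mul_phi 0

lemma integrable_mul_phi : Integrable fun x => x * phi x := by
  simpa using integrable_pow_mul_phi 1

lemma tendsto_pow_mul_phi_atTop (n : ℕ) : Tendsto (fun x => x ^ n * phi x) atTop (𝓝 0) := by
  have h_exp : Tendsto (fun x : ℝ => exp (-(1 / 2) * x)) atTop (𝓝 0) :=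
    tendsto_exp_atBot.comp (tendsto_id.const_mul_atTop_of_neg (by norm_num))
  have h := ((rpow_mul_exp_neg_mul_sq_isLittleO_exp_neg (by norm_num : (0 : ℝ) < 1 / 2)
    n).isBigO.trans_tendsto h_exp).const_mul (√(2 * π))⁻¹
  simp only [rpow_natCast, mul_zero] at h
  convert h using 2 with x
  rw [phi_eq_mul_exp]
  ring

lemma setIntegral_Ioi_comp_add_right {E : Type*} [NormedAddCommGroup E] [NormedSpace ℝ E]
    (f : ℝ → E) (a d : ℝ) : ∫ x in Ioi a, f (x + d) = ∫ x in Ioi (a + d), f x := by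
  have h_emb : MeasurableEmbedding fun x : ℝ => x + d :=
    (Homeomorph.addRight d).isClosedEmbedding.measurableEmbedding
  conv_rhs => rw [← map_add_right_eq_self volume d]
  rw [h_emb.setIntegral_map, preimage_add_const_Ioi, add_sub_cancel_right]

lemma integral_Ioi_mul_phi (u : ℝ) : ∫ t in Ioi u, t * phi t = phi u := by
  have h := integral_Ioi_of_hasDerivAt_of_tendsto (a := u) (f := fun t => -phi t)
    (f' := fun t => t * phi t) (m := 0)
    continuous_phi.neg.continuousWithinAt
    (fun t _ => (hasDerivAt_phi t).neg.congr_deriv (by ring))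
    integrable_mul_phi.integrableOn
    (by simpa using (tendsto_pow_mul_phi_atTop 0).neg)
  simpa using h

lemma integrable_sq_sub_one_mul_phi : Integrable fun t => (t ^ 2 - 1) * phi t := by
  simpa only [Pi.sub_def, sub_mul, one_mul] using (integrable_pow_mul_phi 2).sub integrable_phi

lemma integral_Ioi_sq_sub_one_mul_phi (u : ℝ) :
    ∫ t in Ioi u, (t ^ 2 - 1) * phi t = u * phi u := by
  have h := integral_Ioi_of_hasDerivAt_of_tendsto (a := u) (f := fun t => -(t * phi t))
    (f' := fun t => (t ^ 2 - 1) * phi t) (m := 0)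
    (continuous_id.mul continuous_phi).neg.continuousWithinAt
    (fun t _ => ((hasDerivAt_id t).mul (hasDerivAt_phi t)).neg.congr_deriv
      (by simp only [id]; ring))
    integrable_sq_sub_one_mul_phi.integrableOn
    (by simpa using (tendsto_pow_mul_phi_atTop 1).neg)
  simpa using h

lemma integrable_sub_mul_phi (u : ℝ) : Integrable fun t => (t - u) * phi t := by
  simpa only [Pi.sub_def, sub_mul] using integrable_mul_phi.sub (integrable_phi.const_mul u)

lemma integral_Ioi_sub_mul_phi (u : ℝ) :
    ∫ t in Ioi u, (t - u) * phi t = phi u - u * Psi u := by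
  simp only [sub_mul]
  rw [integral_sub integrable_mul_phi.integrableOn (integrable_phi.const_mul u).integrableOn,
    integral_const_mul, integral_Ioi_mul_phi, Psi]

-- Expand `0 ≤ ∫_u^∞ (t - u)² φ(t) dt` with the two integrations by parts above.
lemma mul_phi_le_one_add_sq_mul_Psi (u : ℝ) : u * phi u ≤ (1 + u ^ 2) * Psi u := by
  have h_sq : IntegrableOn (fun t => (t ^ 2 - 1) * phi t) (Ioi u) :=
    integrable_sq_sub_one_mul_phi.integrableOn
  have h_lin : IntegrableOn (fun t => 2 * u * (t * phi t)) (Ioi u) :=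
    (integrable_mul_phi.const_mul (2 * u)).integrableOn
  have h_nonneg : 0 ≤ ∫ t in Ioi u, (t - u) ^ 2 * phi t :=
    setIntegral_nonneg measurableSet_Ioi fun t _ => mul_nonneg (sq_nonneg _) (phi_pos t).le
  have h_expand : ∫ t in Ioi u, (t - u) ^ 2 * phi t
      = u * phi u - 2 * u * phi u + (1 + u ^ 2) * Psi u := by
    calc ∫ t in Ioi u, (t - u) ^ 2 * phi t
        = ∫ t in Ioi u, ((t ^ 2 - 1) * phi t - 2 * u * (t * phi t) + (1 + u ^ 2) * phi t) := by
          congr with t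
          ring
      _ = u * phi u - 2 * u * phi u + (1 + u ^ 2) * Psi u := by
          rw [integral_add, integral_sub h_sq h_lin, integral_const_mul, integral_const_mul,
            integral_Ioi_sq_sub_one_mul_phi, integral_Ioi_mul_phi, Psi]
          exacts [h_sq.sub h_lin, (integrable_phi.const_mul _).integrableOn]
  linarith

lemma exp_mul_phi_add (u ε t : ℝ) :
    exp (u * ε + ε ^ 2 / 2) * phi (t + ε) = exp (-((t - u) * ε)) * phi t := by
  simp only [phi]
  rw [mul_left_comm, ← exp_add, mul_left_comm, ← exp_add]
  ring_nf

lemma Psi_sub_exp_mul_Psi_add (u ε : ℝ) :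
    Psi u - exp (u * ε + ε ^ 2 / 2) * Psi (u + ε)
      = ∫ t in Ioi u, (1 - exp (-((t - u) * ε))) * phi t := by
  have h_shift : IntegrableOn (fun t => exp (u * ε + ε ^ 2 / 2) * phi (t + ε)) (Ioi u) :=
    ((integrable_phi.comp_add_right ε).const_mul _).integrableOn
  rw [Psi, Psi, ← setIntegral_Ioi_comp_add_right, ← integral_const_mul,
    ← integral_sub integrable_phi.integrableOn h_shift]
  congr with t
  rw [exp_mul_phi_add]
  ring

/-- `0 ≤ Ψ(u) − exp(uε + ε²/2)·Ψ(u + ε) ≤ (ε/u)·Ψ(u)` for `u > 0`, `ε ≥ 0`. -/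
theorem stmt2 (u ε : ℝ) (hu : 0 < u) (hε : 0 ≤ ε) :
    0 ≤ Psi u - Real.exp (u * ε + ε ^ 2 / 2) * Psi (u + ε) ∧
      Psi u - Real.exp (u * ε + ε ^ 2 / 2) * Psi (u + ε) ≤ (ε / u) * Psi u := by
  rw [Psi_sub_exp_mul_Psi_add]
  have h_nonneg : ∀ t ∈ Ioi u, 0 ≤ (1 - exp (-((t - u) * ε))) * phi t := fun t ht =>
    mul_nonneg (sub_nonneg.2 (exp_le_one_iff.2 (by nlinarith [mem_Ioi.1 ht])))
      (phi_pos t).le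
  have h_le : ∀ t ∈ Ioi u, (1 - exp (-((t - u) * ε))) * phi t ≤ ε * ((t - u) * phi t) :=
    fun t _ => by nlinarith [one_sub_le_exp_neg ((t - u) * ε), phi_pos t]
  refine ⟨setIntegral_nonneg measurableSet_Ioi h_nonneg, ?_⟩
  calc ∫ t in Ioi u, (1 - exp (-((t - u) * ε))) * phi t
      ≤ ∫ t in Ioi u, ε * ((t - u) * phi t) :=
        integral_mono_of_nonneg (ae_restrict_of_forall_mem measurableSet_Ioi h_nonneg)
          ((integrable_sub_mul_phi u).const_mul ε).integrableOn
          (ae_restrict_of_forall_mem measurableSet_Ioi h_le)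
    _ = ε * (phi u - u * Psi u) := by rw [integral_const_mul, integral_Ioi_sub_mul_phi]
    _ ≤ ε / u * Psi u := by
        rw [div_mul_eq_mul_div, le_div_iff₀ hu]
        nlinarith [mul_phi_le_one_add_sq_mul_Psi u]
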